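/- arXiv:0711.2871 — 5 statements merged into one kernel-verified Lean document; each statement's English description precedes it below -/
import Mathlib

section
/- For all natural numbers i, j with i ≤ 2j and j ≤ 2i+2, one has ( C(i+j+1, 2j−i) + C(i+j+2, 2j−i) ) · (2j−i)! · (2i−j+2)! = (3i+4) · (i+j+1)!. -/
/-- For naturals `i, j` with `i ≤ 2j` and `j ≤ 2i+2`,
`(C(i+j+1, 2j−i) + C(i+j+2, 2j−i)) · (2j−i)! · (2i−j+2)! = (3i+4) · (i+j+1)!`. -/
theorem choose_weight_eval (i j : ℕ) (h₁ : i ≤ 2 * j) (h₂ : j ≤ 2 * i + 2) :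
    (Nat.choose (i + j + 1) (2 * j - i) + Nat.choose (i + j + 2) (2 * j - i)) *
      (2 * j - i).factorial * (2 * i + 2 - j).factorial
      = (3 * i + 4) * (i + j + 1).factorial := by
  rcases eq_or_lt_of_le h₂ with h | h
  · -- j = 2i+2
    subst h
    have e1 : 2 * (2 * i + 2) - i = 3 * i + 4 := by omega
    have e2 : i + (2 * i + 2) + 1 = 3 * i + 3 := by omega
    have e3 : i + (2 * i + 2) + 2 = 3 * i + 4 := by omega
    have e4 : 2 * i + 2 - (2 * i + 2) = 0 := by omega
    rw [e1, e2, e3, e4, Nat.choose_eq_zero_of_lt (by omega), Nat.choose_self]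
    simp [Nat.factorial_succ]
  · -- j ≤ 2i+1
    have ha : 2 * j - i ≤ i + j + 1 := by omega
    have hb : 2 * j - i ≤ i + j + 2 := by omega
    have e1 := Nat.choose_mul_factorial_mul_factorial ha
    have e2 := Nat.choose_mul_factorial_mul_factorial hb
    have hs1 : i + j + 1 - (2 * j - i) = 2 * i + 1 - j := by omega
    have hs2 : i + j + 2 - (2 * j - i) = 2 * i + 2 - j := by omega
    rw [hs1] at e1
    rw [hs2] at e2
    have hf : (2 * i + 2 - j).factorial
        = (2 * i + 2 - j) * (2 * i + 1 - j).factorial := by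
      have hx : 2 * i + 2 - j = (2 * i + 1 - j) + 1 := by omega
      rw [hx, Nat.factorial_succ]
    have hf2 : (i + j + 2).factorial = (i + j + 2) * (i + j + 1).factorial :=
      Nat.factorial_succ _
    have hsum : 2 * i + 2 - j + (i + j + 2) = 3 * i + 4 := by omega
    calc (Nat.choose (i + j + 1) (2 * j - i) + Nat.choose (i + j + 2) (2 * j - i)) *
          (2 * j - i).factorial * (2 * i + 2 - j).factorial
        = (2 * i + 2 - j) * (Nat.choose (i + j + 1) (2 * j - i) *
            (2 * j - i).factorial * (2 * i + 1 - j).factorial)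
          + Nat.choose (i + j + 2) (2 * j - i) *
            (2 * j - i).factorial * (2 * i + 2 - j).factorial := by
          rw [hf]; ring
      _ = (2 * i + 2 - j) * (i + j + 1).factorial + (i + j + 2).factorial := by
          rw [e1, e2]
      _ = (3 * i + 4) * (i + j + 1).factorial := by
          rw [hf2, ← hsum]; ring
end

section
/- For every natural number n, ∏_{i=0}^{n−1} [ i!·(i+1)!·(3i+1)!·(3i+4)! ] / [ (2i)!·(2i+1)!·(2i+2)!·(2i+3)! ] = A(n)·A(n+1), as an identity of rational numbers, where A(m) = ∏_{i=0}^{m−1} (3i+1)!/(m+i)!. -/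
/-!
Write `S m = ∏_{i<m} i!` and `T m = ∏_{i<m} (3i+1)!`. Since `∏_{i<m} (m+i)! = S(2m) / S m`, we get
`A m = T m · S m / S(2m)`. On the left, the factors `i!` and `(i+1)!` multiply to `S n` and `S(n+1)`,
the factors `(3i+1)!` and `(3i+4)!` to `T n` and `T(n+1)`, and pairing consecutive factorials in the
denominator gives `S(2n) · S(2n+2)`, because `0! · 1! = 1`.
-/

open Finset

/-- The alternating-sign-matrix counting product `A(m) = ∏_{i=0}^{m-1} (3i+1)!/(m+i)!`,
regarded as a rational number. -/
noncomputable def asmA (m : ℕ) : ℚ :=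
  ∏ i ∈ Finset.range m, ((3 * i + 1).factorial : ℚ) / ((m + i).factorial : ℚ)

theorem Finset.prod_range_two_mul {M : Type*} [CommMonoid M] (f : ℕ → M) (n : ℕ) :
    ∏ i ∈ range (2 * n), f i = ∏ i ∈ range n, (f (2 * i) * f (2 * i + 1)) := by
  induction n with
  | zero => simp
  | succ n ih =>
    rw [Nat.mul_succ, prod_range_succ, prod_range_succ, prod_range_succ, ih, mul_assoc]

theorem Finset.prod_range_two_mul_add_two {M : Type*} [CommMonoid M] (f : ℕ → M)
    (h : f 0 * f 1 = 1) (n : ℕ) :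
    ∏ i ∈ range (2 * n + 2), f i = ∏ i ∈ range n, (f (2 * i + 2) * f (2 * i + 3)) := by
  rw [show 2 * n + 2 = 2 * (n + 1) by ring, prod_range_two_mul, prod_range_succ', h, mul_one]
  rfl

theorem prod_range_factorial_add (m : ℕ) :
    ∏ i ∈ range m, ((m + i).factorial : ℚ) =
      (∏ i ∈ range (2 * m), (i.factorial : ℚ)) / ∏ i ∈ range m, (i.factorial : ℚ) := by
  have hpos : ∏ i ∈ range m, (i.factorial : ℚ) ≠ 0 :=
    prod_ne_zero_iff.mpr fun i _ => Nat.cast_ne_zero.mpr i.factorial_ne_zero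
  rw [two_mul, prod_range_add, mul_div_cancel_left₀ _ hpos]

theorem asmA_eq (m : ℕ) :
    asmA m = (∏ i ∈ range m, ((3 * i + 1).factorial : ℚ)) * (∏ i ∈ range m, (i.factorial : ℚ)) /
      ∏ i ∈ range (2 * m), (i.factorial : ℚ) := by
  rw [asmA, prod_div_distrib, prod_range_factorial_add, div_div_eq_mul_div]

/-- The closed product formula for the number of qCSSCPPs of size `2n+1`:
`∏_{i=0}^{n−1} i!·(i+1)!·(3i+1)!·(3i+4)! / ((2i)!·(2i+1)!·(2i+2)!·(2i+3)!) = A(n)·A(n+1)`. -/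
theorem qCSSCPP_product_eq (n : ℕ) :
    (∏ i ∈ Finset.range n,
        ((i.factorial : ℚ) * ((i + 1).factorial : ℚ) * ((3 * i + 1).factorial : ℚ) *
            ((3 * i + 4).factorial : ℚ)) /
          (((2 * i).factorial : ℚ) * ((2 * i + 1).factorial : ℚ) *
            ((2 * i + 2).factorial : ℚ) * ((2 * i + 3).factorial : ℚ)))
      = asmA n * asmA (n + 1) := by
  have hS : ∏ i ∈ range (n + 1), (i.factorial : ℚ) = ∏ i ∈ range n, ((i + 1).factorial : ℚ) := by
    simp [prod_range_succ']
  have hT : ∏ i ∈ range (n + 1), ((3 * i + 1).factorial : ℚ) =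
      ∏ i ∈ range n, ((3 * i + 4).factorial : ℚ) := by
    simp [prod_range_succ', Nat.mul_succ]
  have hS₂ : ∏ i ∈ range (2 * (n + 1)), (i.factorial : ℚ) =
      ∏ i ∈ range n, (((2 * i + 2).factorial : ℚ) * ((2 * i + 3).factorial : ℚ)) :=
    prod_range_two_mul_add_two (fun i => (i.factorial : ℚ)) (by simp) n
  rw [asmA_eq, asmA_eq, hS, hT, hS₂, prod_range_two_mul (fun i => (i.factorial : ℚ))]
  simp only [prod_div_distrib, prod_mul_distrib]
  ring
end

section
/- For every natural number n, A(n+1) · (2n)! · (2n+1)! = A(n) · n! · (3n+1)!, where A(m) = ∏_{i=0}^{m−1} (3i+1)!/(m+i)! is regarded as a rational number. -/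
open Finset Nat

theorem Finset.prod_range_shift_mul {M : Type*} [CommMonoid M] (f : ℕ → M) (m k : ℕ) :
    (∏ i ∈ range k, f (m + 1 + i)) * f m = (∏ i ∈ range k, f (m + i)) * f (m + k) := by
  rw [← prod_range_succ, prod_range_succ', add_zero]
  simp only [add_right_comm m 1, add_assoc]

noncomputable def asmDenom (m : ℕ) : ℚ :=
  ∏ i ∈ range m, ((m + i)! : ℚ)

theorem asmA_eq_div (m : ℕ) :
    asmA m = (∏ i ∈ range m, ((3 * i + 1)! : ℚ)) / asmDenom m :=
  prod_div_distrib ..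

theorem asmDenom_ne_zero (m : ℕ) : asmDenom m ≠ 0 :=
  prod_ne_zero_iff.2 fun _ _ => cast_ne_zero.2 (factorial_ne_zero _)

theorem asmDenom_succ_mul_factorial (n : ℕ) :
    asmDenom (n + 1) * n ! = asmDenom n * (2 * n)! * (2 * n + 1)! := by
  rw [asmDenom, asmDenom, prod_range_succ, mul_right_comm,
    prod_range_shift_mul (fun j => (j ! : ℚ)), two_mul, add_right_comm]

/-- The recurrence `A(n+1)/A(n) = n!(3n+1)!/((2n)!(2n+1)!)` for the
alternating-sign matrix numbers, cleared of denominators. -/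
theorem asmA_recurrence (n : ℕ) :
    asmA (n + 1) * ((2 * n).factorial : ℚ) * ((2 * n + 1).factorial : ℚ)
      = asmA n * (n.factorial : ℚ) * ((3 * n + 1).factorial : ℚ) := by
  rw [asmA_eq_div, asmA_eq_div, prod_range_succ]
  field_simp [asmDenom_ne_zero]
  linear_combination -asmDenom_succ_mul_factorial n
end

section
/- Let N be an even positive integer and let A be an N×N integer matrix which is an alternating-sign matrix (all partial sums of each row and each column, taken from the start, lie in {0,1}, and each full row sum and column sum equals 1) and which is invariant under rotation by 90 degrees, i.e. A(i,j) = A(j, N−1−i) for all 0 ≤ i,j ≤ N−1. Then N is divisible by 4. -/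
/-!
A quarter-turn-invariant function on `Fin n × Fin n` has equal sums over the four quadrants,
since the quarter turn permutes them cyclically; this needs `n` even, so that `i ↦ n - 1 - i`
swaps the two halves of `Fin n`. The entries of an `N × N` alternating-sign matrix sum to `N`,
which is therefore four times the sum over one quadrant.
-/

/-- `A` is an alternating-sign matrix: every partial sum (from the start) of each
row and each column lies in `{0, 1}`, and each full row sum and column sum equals `1`. -/
def IsASM {N : ℕ} (A : Matrix (Fin N) (Fin N) ℤ) : Prop :=
  (∀ i k : Fin N, (∑ j ∈ Finset.univ.filter (· ≤ k), A i j) ∈ ({0, 1} : Set ℤ)) ∧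
  (∀ j k : Fin N, (∑ i ∈ Finset.univ.filter (· ≤ k), A i j) ∈ ({0, 1} : Set ℤ)) ∧
  (∀ i : Fin N, ∑ j, A i j = 1) ∧
  (∀ j : Fin N, ∑ i, A i j = 1)

open Finset

namespace Fin

def quarterTurn (n : ℕ) : Equiv.Perm (Fin n × Fin n) where
  toFun p := (p.2, p.1.rev)
  invFun p := (p.2.rev, p.1)
  left_inv p := by simp
  right_inv p := by simp

@[simp]
theorem quarterTurn_apply {n : ℕ} (p : Fin n × Fin n) : quarterTurn n p = (p.2, p.1.rev) := rfl

theorem two_mul_val_rev_lt_iff {n : ℕ} (hn : Even n) (i : Fin n) :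
    2 * (i.rev : ℕ) < n ↔ ¬ 2 * (i : ℕ) < n := by
  obtain ⟨m, rfl⟩ := hn
  rw [val_rev]
  omega

end Fin

open Fin

section QuarterTurnInvariant

variable {R : Type*} [AddCommMonoid R] {n : ℕ} {f : Fin n × Fin n → R}

theorem sum_filter_eq_of_quarterTurn_invariant (hf : ∀ p, f (quarterTurn n p) = f p)
    (P Q : Fin n × Fin n → Prop) [DecidablePred P] [DecidablePred Q]
    (hPQ : ∀ p, P p ↔ Q (quarterTurn n p)) :
    ∑ p ∈ univ.filter P, f p = ∑ p ∈ univ.filter Q, f p := by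
  rw [sum_filter, sum_filter, ← Equiv.sum_comp (quarterTurn n) fun p ↦ if Q p then f p else 0]
  simp only [hPQ, hf]

theorem sum_eq_four_nsmul_sum_quadrant_of_quarterTurn_invariant
    (hf : ∀ p, f (quarterTurn n p) = f p) (top : Fin n → Prop) [DecidablePred top]
    (hrev : ∀ i, top i.rev ↔ ¬ top i) :
    ∑ p, f p = 4 • ∑ p ∈ univ.filter (fun p ↦ top p.1 ∧ top p.2), f p := by
  have h10 := sum_filter_eq_of_quarterTurn_invariant hf
    (fun p ↦ ¬ top p.1 ∧ top p.2) (fun p ↦ top p.1 ∧ top p.2)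
    fun p ↦ by simp only [quarterTurn_apply, hrev]; tauto
  have h11 := sum_filter_eq_of_quarterTurn_invariant hf
    (fun p ↦ ¬ top p.1 ∧ ¬ top p.2) (fun p ↦ ¬ top p.1 ∧ top p.2)
    fun p ↦ by simp only [quarterTurn_apply, hrev]; tauto
  have h01 := sum_filter_eq_of_quarterTurn_invariant hf
    (fun p ↦ top p.1 ∧ ¬ top p.2) (fun p ↦ ¬ top p.1 ∧ ¬ top p.2)
    fun p ↦ by simp only [quarterTurn_apply, hrev]; tauto
  rw [← sum_filter_add_sum_filter_not univ (fun p ↦ top p.1),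
    ← sum_filter_add_sum_filter_not _ (fun p ↦ top p.2),
    ← sum_filter_add_sum_filter_not (univ.filter _) (fun p ↦ top p.2)]
  simp only [filter_filter]
  rw [h01, h11, h10]
  abel

end QuarterTurnInvariant

theorem Matrix.sum_entries_eq_card_of_row_sums_eq_one {ι R : Type*} [Fintype ι]
    [AddCommMonoidWithOne R] (A : Matrix ι ι R) (hA : ∀ i, ∑ j, A i j = 1) :
    ∑ p : ι × ι, A p.1 p.2 = Fintype.card ι := by
  simp [Fintype.sum_prod_type, hA]

theorem qt_invariant_asm_size_dvd_four_general (N : ℕ) (hEven : Even N)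
    (A : Matrix (Fin N) (Fin N) ℤ) (hASM : IsASM A)
    (hQT : ∀ i j : Fin N, A i j = A j i.rev) :
    4 ∣ N := by
  have hsum := A.sum_entries_eq_card_of_row_sums_eq_one hASM.2.2.1
  rw [sum_eq_four_nsmul_sum_quadrant_of_quarterTurn_invariant (fun p ↦ (hQT p.1 p.2).symm)
    (fun i ↦ 2 * (i : ℕ) < N) (two_mul_val_rev_lt_iff hEven), Fintype.card_fin] at hsum
  exact Int.natCast_dvd_natCast.mp ⟨_, by rw [← hsum, nsmul_eq_mul]⟩

/-- If an `N × N` alternating-sign matrix (`N` even and positive) is invariant under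
rotation by 90 degrees, then `N` is divisible by 4. -/
theorem qt_invariant_asm_size_dvd_four (N : ℕ) (hN : 0 < N) (hEven : Even N)
    (A : Matrix (Fin N) (Fin N) ℤ) (hASM : IsASM A)
    (hQT : ∀ i j : Fin N, A i j = A j i.rev) :
    4 ∣ N :=
  qt_invariant_asm_size_dvd_four_general N hEven A hASM hQT
end

section
/- Let n ≥ 0, let N = 4n+2, and let A be an N×N integer alternating-sign matrix (all partial sums of each row and each column lie in {0,1}, and each full row sum and column sum equals 1) such that A is invariant under the half-turn rotation, A(i,j) = A(N−1−i, N−1−j) for all i,j, and invariant under the quarter-turn rotation away from the center, A(i,j) = A(j, N−1−i) for all (i,j) with {i,j} ⊄ {2n, 2n+1}, i.e. for all (i,j) outside the central 2×2 block {2n,2n+1}×{2n,2n+1}. Then exactly two of the four central entries A(2n,2n), A(2n,2n+1), A(2n+1,2n), A(2n+1,2n+1) are equal to 0. -/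
/-!
Let `c = 2n`. The first `2n + 1` rows of `A` sum to `2n + 1`. Fold the right half of these rows
onto the left half by `j ↦ rev j`; the quarter-turn symmetry `A i j = A j (rev i)` then identifies
the folded upper-right quadrant with the upper-left one, except at the single entry `(c, c)`, so
`2n + 1 = 2T + (A c (c+1) - A c c)` where `T` is the upper-left quadrant sum. Hence
`A c (c+1) - A c c` is odd. Since ASM entries lie in `{-1, 0, 1}`, exactly one of `A c c` and
`A c (c+1)` vanishes, and the half-turn symmetry copies them to `A (c+1) (c+1)` and `A (c+1) c`.
-/

open Finset

theorem IsASM.abs_le_one {N : ℕ} {A : Matrix (Fin N) (Fin N) ℤ} (hA : IsASM A) (i j : Fin N) :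
    |A i j| ≤ 1 := by
  have mem01 : ∀ k : Fin N, (∑ l ∈ univ.filter (· ≤ k), A i l) = 0 ∨
      (∑ l ∈ univ.filter (· ≤ k), A i l) = 1 := hA.1 i
  by_cases hj : (j : ℕ) = 0
  · have hsingle : univ.filter (· ≤ j) = {j} := by
      ext l
      simp only [mem_filter, mem_univ, true_and, mem_singleton, Fin.le_def, Fin.ext_iff]
      omega
    have := mem01 j
    rw [hsingle, sum_singleton] at this
    rcases this with h | h <;> rw [h] <;> norm_num
  · set k : Fin N := ⟨j - 1, by omega⟩
    have hinsert : univ.filter (· ≤ j) = insert j (univ.filter (· ≤ k)) := by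
      ext l
      simp only [mem_filter, mem_univ, true_and, mem_insert, k, Fin.le_def, Fin.ext_iff]
      omega
    have hj_notMem : j ∉ univ.filter (· ≤ k) := by
      simp only [mem_filter, mem_univ, true_and, Fin.le_def, k]
      omega
    have hstep := mem01 j
    rw [hinsert, sum_insert hj_notMem] at hstep
    rw [abs_le]
    rcases mem01 k with h | h <;> rw [h] at hstep <;> omega

namespace Fin

variable {N m : ℕ}

def firstHalf (m : ℕ) : Finset (Fin N) := {i | (i : ℕ) < m}

theorem card_firstHalf (hN : N = 2 * m) : #(firstHalf m : Finset (Fin N)) = m := by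
  rw [firstHalf, card_filter_val_lt]; omega

theorem rev_mem_firstHalf_iff (hN : N = 2 * m) (i : Fin N) :
    i.rev ∈ firstHalf m ↔ i ∉ firstHalf m := by
  simp only [firstHalf, mem_filter, mem_univ, val_rev, true_and]
  omega

theorem sum_compl_firstHalf {M : Type*} [AddCommMonoid M] (hN : N = 2 * m) (f : Fin N → M) :
    ∑ i ∈ (firstHalf m)ᶜ, f i = ∑ i ∈ firstHalf m, f i.rev := by
  refine sum_nbij' rev rev (fun i hi => ?_) (fun i hi => ?_) (fun i _ => i.rev_rev)
    (fun i _ => i.rev_rev) (fun i _ => by rw [rev_rev])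
  · simpa [rev_mem_firstHalf_iff hN] using hi
  · simpa [rev_mem_firstHalf_iff hN, rev_rev] using hi

end Fin

theorem Matrix.sum_firstHalf_rows {N m : ℕ} {R : Type*} [AddCommMonoid R] (hN : N = 2 * m)
    (A : Matrix (Fin N) (Fin N) R) :
    ∑ i ∈ Fin.firstHalf m, ∑ j, A i j =
      ∑ i ∈ Fin.firstHalf m, ∑ j ∈ Fin.firstHalf m, A i j +
        ∑ i ∈ Fin.firstHalf m, ∑ j ∈ Fin.firstHalf m, A i j.rev := by
  rw [← sum_add_distrib]
  refine sum_congr rfl fun i _ => ?_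
  rw [← sum_add_sum_compl (Fin.firstHalf m), Fin.sum_compl_firstHalf hN]

theorem Matrix.sum_rev_eq_add_of_quarterTurn {N : ℕ} {R : Type*} [AddCommGroup R]
    (A : Matrix (Fin N) (Fin N) R) (s : Finset (Fin N)) (c : Fin N) (hc : c ∈ s)
    (hA : ∀ i ∈ s, ∀ j ∈ s, (i, j) ≠ (c, c) → A i j = A j i.rev) :
    ∑ i ∈ s, ∑ j ∈ s, A i j.rev =
      ∑ i ∈ s, ∑ j ∈ s, A i j + (A c c.rev - A c c) := by
  have hdefect : ∑ p ∈ s ×ˢ s, (A p.2 p.1.rev - A p.1 p.2) = A c c.rev - A c c :=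
    (sum_eq_single_of_mem (c, c) (mem_product.2 ⟨hc, hc⟩) fun p hp hpc => by
      rw [mem_product] at hp; rw [hA _ hp.1 _ hp.2 hpc, sub_self])
  rw [sum_sub_distrib, sum_product, sum_product] at hdefect
  rw [sum_comm, ← hdefect, add_sub_cancel]

theorem count_zero_eq_two_of_odd_sub {a b : ℤ} (ha : |a| ≤ 1) (hb : |b| ≤ 1)
    (hab : Odd (b - a)) :
    [a, b, b, a].count 0 = 2 := by
  rw [abs_le] at ha hb
  obtain ⟨k, hk⟩ := hab
  obtain ⟨ha₁, ha₂⟩ := ha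
  obtain ⟨hb₁, hb₂⟩ := hb
  interval_cases a <;> interval_cases b <;> first | omega | decide

/-- Let `N = 4n+2` and let `A` be an `N × N` alternating-sign matrix which is invariant
under the half-turn rotation and invariant under the quarter-turn rotation away from the
central `2 × 2` block `{2n, 2n+1} × {2n, 2n+1}`. Then exactly two of the four central
entries of `A` are equal to `0`. -/
theorem qqt_invariant_asm_center (n : ℕ)
    (A : Matrix (Fin (4 * n + 2)) (Fin (4 * n + 2)) ℤ) (hASM : IsASM A)
    (hHT : ∀ i j : Fin (4 * n + 2), A i j = A i.rev j.rev)
    (hQT : ∀ i j : Fin (4 * n + 2),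
      ¬(((i : ℕ) = 2 * n ∨ (i : ℕ) = 2 * n + 1) ∧
        ((j : ℕ) = 2 * n ∨ (j : ℕ) = 2 * n + 1)) →
      A i j = A j i.rev) :
    ([A ⟨2 * n, by omega⟩ ⟨2 * n, by omega⟩,
      A ⟨2 * n, by omega⟩ ⟨2 * n + 1, by omega⟩,
      A ⟨2 * n + 1, by omega⟩ ⟨2 * n, by omega⟩,
      A ⟨2 * n + 1, by omega⟩ ⟨2 * n + 1, by omega⟩] : List ℤ).count 0 = 2 := by
  set c : Fin (4 * n + 2) := ⟨2 * n, by omega⟩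
  set c' : Fin (4 * n + 2) := ⟨2 * n + 1, by omega⟩
  have hc : c.rev = c' := Fin.ext (by simp only [c, c', Fin.val_rev]; omega)
  have hc' : c'.rev = c := by rw [← hc, Fin.rev_rev]
  have hN : 4 * n + 2 = 2 * (2 * n + 1) := by ring
  set L : Finset (Fin (4 * n + 2)) := Fin.firstHalf (2 * n + 1)
  set T := ∑ i ∈ L, ∑ j ∈ L, A i j
  have hdefect : ∑ i ∈ L, ∑ j ∈ L, A i j.rev = T + (A c c' - A c c) := by
    rw [← hc]
    refine Matrix.sum_rev_eq_add_of_quarterTurn A L c (by simp [L, Fin.firstHalf, c])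
      fun i hi j hj hij => ?_
    refine hQT i j fun hcentral => hij ?_
    simp only [L, Fin.firstHalf, mem_filter, mem_univ, true_and] at hi hj
    simp only [Prod.mk.injEq, Fin.ext_iff, c]
    omega
  have hrows : ∑ i ∈ L, ∑ j, A i j = 2 * n + 1 := by
    simp [L, hASM.2.2.1, Fin.card_firstHalf hN]
  rw [Matrix.sum_firstHalf_rows hN, hdefect] at hrows
  have hodd : Odd (A c c' - A c c) := ⟨n - T, by linarith⟩
  rw [hHT c' c, hHT c' c', hc, hc']
  exact count_zero_eq_two_of_odd_sub (hASM.abs_le_one c c) (hASM.abs_le_one c c') hodd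
end
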